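/- Let F be a field, d₀,d₁,d₂ ∈ F× with d₀d₁d₂ ≠ −1, and let x, y, x', y' ∈ F³ be regular elements of the split Albert algebra φ_{d₀,d₁,d₂}. Then U(x,y) = U(x',y') if and only if (x',y') = k(x,y) or (y,y') = k(x,x') for some k ∈ F×. -/
import Mathlib


/-- The split Albert multiplication `φ_{d₀,d₁,d₂}` in coordinates. -/
def albert {F : Type*} [Field F] (d x y : Fin 3 → F) : Fin 3 → F :=
  fun k => x (k + 1) * y (k + 2) + d k * x (k + 2) * y (k + 1)

/-- The subspace `U(x,y) = {(ux, uy) : u ∈ U} ⊆ W²`, as a set. -/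
def Uxy {F : Type*} [Field F] (d x y : Fin 3 → F) :
    Set ((Fin 3 → F) × (Fin 3 → F)) :=
  {p | ∃ u : Fin 3 → F, p = (albert d u x, albert d u y)}

section Aux

variable {F : Type*} [Field F]

/-- The adjugate of the left multiplication matrix `u ↦ albert d u x`, applied to `v`. -/
def adjA (d x v : Fin 3 → F) : Fin 3 → F :=
  fun k => -(d (k+2)) * x k ^ 2 * v k + d k * d (k+2) * x k * x (k+1) * v (k+1)
    + x k * x (k+2) * v (k+2)

lemma albert_smul_left (d : Fin 3 → F) (k : F) (u x : Fin 3 → F) :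
    albert d (k • u) x = k • albert d u x := by
  funext i; simp [albert, smul_eq_mul]; ring

lemma albert_smul_right (d : Fin 3 → F) (k : F) (u x : Fin 3 → F) :
    albert d u (k • x) = k • albert d u x := by
  funext i; simp [albert, smul_eq_mul]; ring

lemma adjA_smul (d x : Fin 3 → F) (k : F) (v : Fin 3 → F) :
    adjA d x (k • v) = k • adjA d x v := by
  funext i; simp [adjA, smul_eq_mul]; ring

lemma albert_adjA (d x v : Fin 3 → F) :
    albert d (adjA d x v) x = (x 0 * x 1 * x 2 * (1 + d 0 * d 1 * d 2)) • v := by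
  funext i; fin_cases i <;> simp [albert, adjA] <;> ring

lemma adjA_albert (d x u : Fin 3 → F) :
    adjA d x (albert d u x) = (x 0 * x 1 * x 2 * (1 + d 0 * d 1 * d 2)) • u := by
  funext i; fin_cases i <;> simp [albert, adjA] <;> ring

lemma albert_surj (d x : Fin 3 → F)
    (hdet : x 0 * x 1 * x 2 * (1 + d 0 * d 1 * d 2) ≠ 0) (w : Fin 3 → F) :
    ∃ u, albert d u x = w := by
  refine ⟨(x 0 * x 1 * x 2 * (1 + d 0 * d 1 * d 2))⁻¹ • adjA d x w, ?_⟩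
  rw [albert_smul_left, albert_adjA, smul_smul, inv_mul_cancel₀ hdet, one_smul]

lemma master (d x y x' y' : Fin 3 → F)
    (heq : Uxy d x y = Uxy d x' y') (v : Fin 3 → F) :
    (x' 0 * x' 1 * x' 2 * (1 + d 0 * d 1 * d 2)) • albert d (adjA d x v) y =
      (x 0 * x 1 * x 2 * (1 + d 0 * d 1 * d 2)) • albert d (adjA d x' v) y' := by
  set δ := x 0 * x 1 * x 2 * (1 + d 0 * d 1 * d 2) with hδ
  set δ' := x' 0 * x' 1 * x' 2 * (1 + d 0 * d 1 * d 2) with hδ'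
  have hmem : (albert d (adjA d x v) x, albert d (adjA d x v) y) ∈ Uxy d x' y' := by
    rw [← heq]; exact ⟨adjA d x v, rfl⟩
  obtain ⟨u', hu'⟩ := hmem
  rw [Prod.mk.injEq] at hu'
  obtain ⟨h1', h2⟩ := hu'
  have h1 : albert d u' x' = δ • v := by rw [← h1', albert_adjA]
  have h3 : δ' • u' = δ • adjA d x' v := by
    have := congrArg (adjA d x') h1
    rwa [adjA_albert, adjA_smul] at this
  calc δ' • albert d (adjA d x v) y = δ' • albert d u' y' := by rw [h2]
    _ = albert d (δ' • u') y' := (albert_smul_left ..).symm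
    _ = albert d (δ • adjA d x' v) y' := by rw [h3]
    _ = δ • albert d (adjA d x' v) y' := albert_smul_left ..

end Aux

/-- For regular `x, y, x', y'`, `U(x,y) = U(x',y')` iff `(x',y') = k(x,y)` or
`(y,y') = k(x,x')` for some `k ∈ F×`. -/
theorem stmt10 {F : Type*} [Field F] (d : Fin 3 → F) (hd : ∀ i, d i ≠ 0)
    (hd' : d 0 * d 1 * d 2 ≠ -1) (x y x' y' : Fin 3 → F)
    (hx : ∀ i, x i ≠ 0) (hy : ∀ i, y i ≠ 0)
    (hx' : ∀ i, x' i ≠ 0) (hy' : ∀ i, y' i ≠ 0) :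
    Uxy d x y = Uxy d x' y' ↔
      ∃ k : F, k ≠ 0 ∧
        ((x' = k • x ∧ y' = k • y) ∨ (y = k • x ∧ y' = k • x')) := by
  have hD : (1 : F) + d 0 * d 1 * d 2 ≠ 0 := by
    intro h; apply hd'; linear_combination h
  have hP : x 0 * x 1 * x 2 ≠ 0 := mul_ne_zero (mul_ne_zero (hx 0) (hx 1)) (hx 2)
  have hP' : x' 0 * x' 1 * x' 2 ≠ 0 := mul_ne_zero (mul_ne_zero (hx' 0) (hx' 1)) (hx' 2)
  have hdet : x 0 * x 1 * x 2 * (1 + d 0 * d 1 * d 2) ≠ 0 := mul_ne_zero hP hD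
  have hdet' : x' 0 * x' 1 * x' 2 * (1 + d 0 * d 1 * d 2) ≠ 0 := mul_ne_zero hP' hD
  constructor
  · intro heq
    have hM := master d x y x' y' heq
    have h00 := congrFun (hM (Pi.single 0 1)) 0
    have h01 := congrFun (hM (Pi.single 1 1)) 0
    have h02 := congrFun (hM (Pi.single 2 1)) 0
    have h10 := congrFun (hM (Pi.single 0 1)) 1
    have h11 := congrFun (hM (Pi.single 1 1)) 1
    have h12 := congrFun (hM (Pi.single 2 1)) 1
    have h20 := congrFun (hM (Pi.single 0 1)) 2
    have h21 := congrFun (hM (Pi.single 1 1)) 2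
    have h22 := congrFun (hM (Pi.single 2 1)) 2
    simp [albert, adjA, Pi.single_apply] at h00 h01 h02 h10 h11 h12 h20 h21 h22
    -- cleaned equations
    have e1 : x' 0 * x' 1 * x' 2 * (x 1 * (x 1 * y 2 - x 2 * y 1)) =
        x 0 * x 1 * x 2 * (x' 1 * (x' 1 * y' 2 - x' 2 * y' 1)) :=
      mul_left_cancel₀ (mul_ne_zero hD (hd 0)) (by linear_combination -h01)
    have e2 : x' 0 * x' 1 * x' 2 * (x 2 * (x 1 * y 2 - x 2 * y 1)) =
        x 0 * x 1 * x 2 * (x' 2 * (x' 1 * y' 2 - x' 2 * y' 1)) :=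
      mul_left_cancel₀ (mul_ne_zero hD (mul_ne_zero (hd 0) (hd 1))) (by linear_combination h02)
    have e3 : x' 0 * x' 1 * x' 2 * (x 0 * (x 2 * y 0 - x 0 * y 2)) =
        x 0 * x 1 * x 2 * (x' 0 * (x' 2 * y' 0 - x' 0 * y' 2)) :=
      mul_left_cancel₀ (mul_ne_zero hD (mul_ne_zero (hd 1) (hd 2))) (by linear_combination h10)
    have e4 : x' 0 * x' 1 * x' 2 * (x 2 * (x 2 * y 0 - x 0 * y 2)) =
        x 0 * x 1 * x 2 * (x' 2 * (x' 2 * y' 0 - x' 0 * y' 2)) :=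
      mul_left_cancel₀ (mul_ne_zero hD (hd 1)) (by linear_combination -h12)
    have e5 : x' 0 * x' 1 * x' 2 * (x 0 * (x 0 * y 1 - x 1 * y 0)) =
        x 0 * x 1 * x 2 * (x' 0 * (x' 0 * y' 1 - x' 1 * y' 0)) :=
      mul_left_cancel₀ (mul_ne_zero hD (hd 2)) (by linear_combination -h20)
    have e6 : x' 0 * x' 1 * x' 2 * (x 1 * (x 0 * y 1 - x 1 * y 0)) =
        x 0 * x 1 * x 2 * (x' 1 * (x' 0 * y' 1 - x' 1 * y' 0)) :=
      mul_left_cancel₀ (mul_ne_zero hD (mul_ne_zero (hd 0) (hd 2))) (by linear_combination h21)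
    have f0 : x' 0 * x' 1 * x' 2 * (x 0 * (x 1 * y 2 + d 0 * d 1 * d 2 * (x 2 * y 1))) =
        x 0 * x 1 * x 2 * (x' 0 * (x' 1 * y' 2 + d 0 * d 1 * d 2 * (x' 2 * y' 1))) :=
      mul_left_cancel₀ hD (by linear_combination h00)
    have f1 : x' 0 * x' 1 * x' 2 * (x 1 * (x 2 * y 0 + d 0 * d 1 * d 2 * (x 0 * y 2))) =
        x 0 * x 1 * x 2 * (x' 1 * (x' 2 * y' 0 + d 0 * d 1 * d 2 * (x' 0 * y' 2))) :=
      mul_left_cancel₀ hD (by linear_combination h11)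
    -- case analysis on the cross products
    by_cases hA : (x 1 * y 2 - x 2 * y 1 = 0) ∧ (x 2 * y 0 - x 0 * y 2 = 0) ∧
        (x 0 * y 1 - x 1 * y 0 = 0)
    · -- Case A : y is proportional to x
      obtain ⟨ha0, ha1, ha2⟩ := hA
      have hz0 : x 0 * x 1 * x 2 * x' 1 * (x' 1 * y' 2 - x' 2 * y' 1) = 0 := by
        linear_combination x' 0 * x' 1 * x' 2 * x 1 * ha0 - e1
      have hz1 : x 0 * x 1 * x 2 * x' 0 * (x' 2 * y' 0 - x' 0 * y' 2) = 0 := by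
        linear_combination x' 0 * x' 1 * x' 2 * x 0 * ha1 - e3
      have hz2 : x 0 * x 1 * x 2 * x' 0 * (x' 0 * y' 1 - x' 1 * y' 0) = 0 := by
        linear_combination x' 0 * x' 1 * x' 2 * x 0 * ha2 - e5
      have ha0' : x' 1 * y' 2 - x' 2 * y' 1 = 0 :=
        (mul_eq_zero.mp hz0).resolve_left (mul_ne_zero hP (hx' 1))
      have ha1' : x' 2 * y' 0 - x' 0 * y' 2 = 0 :=
        (mul_eq_zero.mp hz1).resolve_left (mul_ne_zero hP (hx' 0))
      have ha2' : x' 0 * y' 1 - x' 1 * y' 0 = 0 :=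
        (mul_eq_zero.mp hz2).resolve_left (mul_ne_zero hP (hx' 0))
      have hk : y 0 / x 0 ≠ 0 := div_ne_zero (hy 0) (hx 0)
      have hyx : y = (y 0 / x 0) • x := by
        funext i
        fin_cases i <;> simp only [Pi.smul_apply, smul_eq_mul]
        · exact (div_mul_cancel₀ (y 0) (hx 0)).symm
        · show y 1 = y 0 / x 0 * x 1
          rw [div_mul_eq_mul_div, eq_div_iff (hx 0)]; linear_combination ha2
        · show y 2 = y 0 / x 0 * x 2
          rw [div_mul_eq_mul_div, eq_div_iff (hx 0)]; linear_combination -ha1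
      have hyx' : y' = (y' 0 / x' 0) • x' := by
        funext i
        fin_cases i <;> simp only [Pi.smul_apply, smul_eq_mul]
        · exact (div_mul_cancel₀ (y' 0) (hx' 0)).symm
        · show y' 1 = y' 0 / x' 0 * x' 1
          rw [div_mul_eq_mul_div, eq_div_iff (hx' 0)]; linear_combination ha2'
        · show y' 2 = y' 0 / x' 0 * x' 2
          rw [div_mul_eq_mul_div, eq_div_iff (hx' 0)]; linear_combination -ha1'
      have hcross : (x 0 * x 1 * x 2) * (x' 0 * x' 1 * x' 2) * (1 + d 0 * d 1 * d 2) *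
          (x' 0 * y 0) =
          (x 0 * x 1 * x 2) * (x' 0 * x' 1 * x' 2) * (1 + d 0 * d 1 * d 2) *
          (x 0 * y' 0) := by
        linear_combination (x 0 * x' 0) * f0
          + (x' 0 * x' 1 * x' 2) * x 0 * x' 0 * x 1 * ha1
          - (x' 0 * x' 1 * x' 2) * x 0 * x' 0 * (d 0 * d 1 * d 2) * x 2 * ha2
          - (x 0 * x 1 * x 2) * x 0 * x' 0 * x' 1 * ha1'
          + (x 0 * x 1 * x 2) * x 0 * x' 0 * (d 0 * d 1 * d 2) * x' 2 * ha2'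
      have hcross' : x' 0 * y 0 = x 0 * y' 0 :=
        mul_left_cancel₀ (mul_ne_zero (mul_ne_zero hP hP') hD) hcross
      have hkk : y' 0 / x' 0 = y 0 / x 0 := by
        rw [div_eq_div_iff (hx' 0) (hx 0)]
        linear_combination -hcross'
      exact ⟨y 0 / x 0, hk, Or.inr ⟨hyx, by rw [hyx', hkk]⟩⟩
    · -- Case B : the cross product x × y is nonzero; x' is proportional to x
      have step : x 0 * x' 1 = x 1 * x' 0 → x 0 * x' 2 = x 2 * x' 0 →
          x 1 * x' 2 = x 2 * x' 1 →
          ∃ k : F, k ≠ 0 ∧ ((x' = k • x ∧ y' = k • y) ∨ (y = k • x ∧ y' = k • x')) := by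
        intro r01 r02 r12
        set c := x' 0 / x 0 with hcdef
        have hc : c ≠ 0 := div_ne_zero (hx' 0) (hx 0)
        have hcx0 : x' 0 = c * x 0 := (div_mul_cancel₀ (x' 0) (hx 0)).symm
        have hcx1 : x' 1 = c * x 1 := by
          rw [hcdef, div_mul_eq_mul_div, eq_div_iff (hx 0)]; linear_combination r01
        have hcx2 : x' 2 = c * x 2 := by
          rw [hcdef, div_mul_eq_mul_div, eq_div_iff (hx 0)]; linear_combination r02
        rw [hcx0, hcx1, hcx2] at e1 e3 f0 f1
        have hy1 : y' 1 = c * y 1 := by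
          have H : ((1 + d 0 * d 1 * d 2) * (x 0 * x 1 * x 2 * c) ^ 2) * y' 1 =
              ((1 + d 0 * d 1 * d 2) * (x 0 * x 1 * x 2 * c) ^ 2) * (c * y 1) := by
            linear_combination x 0 * e1 - x 1 * f0
          exact mul_left_cancel₀ (mul_ne_zero hD (pow_ne_zero 2 (mul_ne_zero hP hc))) H
        have hy2 : y' 2 = c * y 2 := by
          have H : (c ^ 2 * (x 0 * x 1 * x 2) * x 1 ^ 2) * y' 2 =
              (c ^ 2 * (x 0 * x 1 * x 2) * x 1 ^ 2) * (c * y 2) := by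
            linear_combination -e1 + c ^ 2 * (x 0 * x 1 * x 2) * x 1 * x 2 * hy1
          exact mul_left_cancel₀
            (mul_ne_zero (mul_ne_zero (pow_ne_zero 2 hc) hP) (pow_ne_zero 2 (hx 1))) H
        have hy0 : y' 0 = c * y 0 := by
          have H : (c ^ 2 * (x 0 * x 1 * x 2) * (x 0 * x 2)) * y' 0 =
              (c ^ 2 * (x 0 * x 1 * x 2) * (x 0 * x 2)) * (c * y 0) := by
            linear_combination -e3 + c ^ 2 * (x 0 * x 1 * x 2) * x 0 ^ 2 * hy2
          exact mul_left_cancel₀ (mul_ne_zero (mul_ne_zero (pow_ne_zero 2 hc) hP)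
            (mul_ne_zero (hx 0) (hx 2))) H
        refine ⟨c, hc, Or.inl ⟨?_, ?_⟩⟩
        · funext i
          fin_cases i <;> simp only [Pi.smul_apply, smul_eq_mul]
          · exact hcx0
          · exact hcx1
          · exact hcx2
        · funext i
          fin_cases i <;> simp only [Pi.smul_apply, smul_eq_mul]
          · exact hy0
          · exact hy1
          · exact hy2
      have imp0 : x 1 * y 2 - x 2 * y 1 ≠ 0 → x 1 * x' 2 = x 2 * x' 1 := by
        intro n0
        refine mul_left_cancel₀ (mul_ne_zero hP' n0) ?_
        linear_combination x' 2 * e1 - x' 1 * e2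
      have imp1 : x 2 * y 0 - x 0 * y 2 ≠ 0 → x 0 * x' 2 = x 2 * x' 0 := by
        intro n1
        refine mul_left_cancel₀ (mul_ne_zero hP' n1) ?_
        linear_combination x' 2 * e3 - x' 0 * e4
      have imp2 : x 0 * y 1 - x 1 * y 0 ≠ 0 → x 0 * x' 1 = x 1 * x' 0 := by
        intro n2
        refine mul_left_cancel₀ (mul_ne_zero hP' n2) ?_
        linear_combination x' 1 * e5 - x' 0 * e6
      by_cases b0 : x 1 * y 2 - x 2 * y 1 = 0 <;>
        by_cases b1 : x 2 * y 0 - x 0 * y 2 = 0 <;>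
          by_cases b2 : x 0 * y 1 - x 1 * y 0 = 0
      · exact absurd ⟨b0, b1, b2⟩ hA
      · -- only a2 ≠ 0 : impossible
        exfalso
        apply b2
        have : x 2 * (x 0 * y 1 - x 1 * y 0) = 0 := by
          linear_combination -(x 0) * b0 - x 1 * b1
        exact (mul_eq_zero.mp this).resolve_left (hx 2)
      · -- only a1 ≠ 0 : impossible
        exfalso
        apply b1
        have : x 1 * (x 2 * y 0 - x 0 * y 2) = 0 := by
          linear_combination -(x 0) * b0 - x 2 * b2
        exact (mul_eq_zero.mp this).resolve_left (hx 1)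
      · -- a1, a2 ≠ 0
        have r02 := imp1 b1
        have r01 := imp2 b2
        refine step r01 r02 (mul_left_cancel₀ (hx 0) ?_)
        linear_combination x 1 * r02 - x 2 * r01
      · -- only a0 ≠ 0 : impossible
        exfalso
        apply b0
        have : x 0 * (x 1 * y 2 - x 2 * y 1) = 0 := by
          linear_combination -(x 1) * b1 - x 2 * b2
        exact (mul_eq_zero.mp this).resolve_left (hx 0)
      · -- a0, a2 ≠ 0
        have r12 := imp0 b0
        have r01 := imp2 b2
        refine step r01 (mul_left_cancel₀ (hx 1) ?_) r12
        linear_combination x 0 * r12 + x 2 * r01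
      · -- a0, a1 ≠ 0
        have r12 := imp0 b0
        have r02 := imp1 b1
        refine step (mul_left_cancel₀ (hx 2) ?_) r02 r12
        linear_combination x 1 * r02 - x 0 * r12
      · -- all nonzero
        have r12 := imp0 b0
        have r02 := imp1 b1
        have r01 := imp2 b2
        exact step r01 r02 r12
  · rintro ⟨k, hk, ⟨hxk, hyk⟩ | ⟨hyk, hyk'⟩⟩
    · ext pq
      simp only [Uxy, Set.mem_setOf_eq]
      constructor
      · rintro ⟨u, rfl⟩
        refine ⟨k⁻¹ • u, ?_⟩
        rw [hxk, hyk, albert_smul_right, albert_smul_right, albert_smul_left,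
          albert_smul_left, smul_smul, smul_smul, mul_inv_cancel₀ hk, one_smul, one_smul]
      · rintro ⟨u, rfl⟩
        refine ⟨k • u, ?_⟩
        rw [hxk, hyk, albert_smul_right, albert_smul_right, albert_smul_left,
          albert_smul_left]
    · ext pq
      simp only [Uxy, Set.mem_setOf_eq]
      constructor
      · rintro ⟨u, rfl⟩
        obtain ⟨u', hu'⟩ := albert_surj d x' hdet' (albert d u x)
        refine ⟨u', ?_⟩
        rw [Prod.mk.injEq]
        constructor
        · exact hu'.symm
        · rw [hyk, hyk', albert_smul_right, albert_smul_right, hu']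
      · rintro ⟨u, rfl⟩
        obtain ⟨u', hu'⟩ := albert_surj d x hdet (albert d u x')
        refine ⟨u', ?_⟩
        rw [Prod.mk.injEq]
        constructor
        · exact hu'.symm
        · rw [hyk, hyk', albert_smul_right, albert_smul_right, hu']
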